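/- For 0 < p ≤ 2 and τ > 0, define φ(z) = (z² + τ²)^{p/2} and for a fixed z̄ define g(z) = (p/2)·(z̄² + τ²)^{(p−2)/2}·z² + φ(z̄) − (p/2)·(z̄² + τ²)^{(p−2)/2}·z̄². Then g is a quadratic tangent majorant of φ at z̄: g(z) ≥ φ(z) for all z ∈ ℝ, g(z̄) = φ(z̄), and g'(z̄) = φ'(z̄). -/

import Mathlib

/-!
For `α = p/2 ∈ (0, 1]` the map `t ↦ t ^ α` is concave on `[0, ∞)`, so it lies below its tangent
line at `s = z̄² + τ² > 0`. Substituting `t = z² + τ²` turns that tangent line into the quadratic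
`g`, which therefore majorizes `φ`; it touches `φ` at `z̄` with the same slope by construction.
-/

open Real

theorem rpow_le_rpow_add_mul_sub {α s t : ℝ} (hα0 : 0 ≤ α) (hα1 : α ≤ 1) (hs : 0 < s)
    (ht : 0 ≤ t) : t ^ α ≤ s ^ α + α * s ^ (α - 1) * (t - s) := by
  have bernoulli : (t / s) ^ α ≤ 1 + α * (t / s - 1) := by
    simpa using rpow_one_add_le_one_add_mul_self (s := t / s - 1)
      (by linarith [div_nonneg ht hs.le]) hα0 hα1
  calc t ^ α = s ^ α * (t / s) ^ α := by
        rw [← mul_rpow hs.le (div_nonneg ht hs.le), mul_div_cancel₀ _ hs.ne']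
    _ ≤ s ^ α * (1 + α * (t / s - 1)) := by gcongr
    _ = s ^ α + α * s ^ (α - 1) * (t - s) := by
        rw [rpow_sub hs, rpow_one]
        field_simp

/-- The quadratic g(z) = (p/2)(z̄²+τ²)^{(p−2)/2} z² + (z̄²+τ²)^{p/2} − (p/2)(z̄²+τ²)^{(p−2)/2} z̄²
is a quadratic tangent majorant of φ(z) = (z²+τ²)^{p/2} at z̄, for 0 < p ≤ 2 and τ > 0. -/
theorem stmt_14 (p τ : ℝ) (hp0 : 0 < p) (hp2 : p ≤ 2) (hτ : 0 < τ) (zb : ℝ)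
    (φ g : ℝ → ℝ)
    (hφ : ∀ z, φ z = (z ^ 2 + τ ^ 2) ^ (p / 2))
    (hg : ∀ z, g z = p / 2 * (zb ^ 2 + τ ^ 2) ^ ((p - 2) / 2) * z ^ 2 + φ zb -
        p / 2 * (zb ^ 2 + τ ^ 2) ^ ((p - 2) / 2) * zb ^ 2) :
    (∀ z, φ z ≤ g z) ∧ g zb = φ zb ∧ deriv g zb = deriv φ zb := by
  have hexp : (p - 2) / 2 = p / 2 - 1 := by ring
  have hs : 0 < zb ^ 2 + τ ^ 2 := by positivity
  set c := p / 2 * (zb ^ 2 + τ ^ 2) ^ (p / 2 - 1)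
  have hg_deriv : HasDerivAt g (c * (2 * zb)) zb := by
    rw [show g = fun z => c * z ^ 2 + (φ zb - c * zb ^ 2) by
      funext z; rw [hg, hexp]; ring]
    simpa using ((hasDerivAt_pow 2 zb).const_mul c).add_const (φ zb - c * zb ^ 2)
  have hφ_deriv : HasDerivAt φ (2 * zb * (p / 2) * (zb ^ 2 + τ ^ 2) ^ (p / 2 - 1)) zb := by
    rw [show φ = fun z => (z ^ 2 + τ ^ 2) ^ (p / 2) from funext hφ]
    exact (by simpa using (hasDerivAt_pow 2 zb).add_const (τ ^ 2) :
      HasDerivAt (fun z : ℝ => z ^ 2 + τ ^ 2) (2 * zb) zb).rpow_const (Or.inl hs.ne')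
  refine ⟨fun z => ?_, by rw [hg]; ring, ?_⟩
  · have := rpow_le_rpow_add_mul_sub (α := p / 2) (by positivity) (by linarith) hs
      (by positivity : 0 ≤ z ^ 2 + τ ^ 2)
    rw [hg, hφ, hφ, hexp]
    linarith
  · rw [hg_deriv.deriv, hφ_deriv.deriv]
    ring
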